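/- arXiv:2211.12465 — 6 statements merged into one kernel-verified Lean document; each statement's English description precedes it below -/
import Mathlib

section
/- Let d_i, r_i, d'_i, r'_i be sequences of integers satisfying the recursions (d'_i, r'_i) = (d_{i-1} r_{i-2} - d_{i-2} r_{i-1})·(d_{i-1}, r_{i-1}) - (d_{i-2}, r_{i-2}) and (d_i, r_i) = (d_{i-1} r'_{i-1} - d'_{i-1} r_{i-1})·(d_{i-1}, r_{i-1}) - (d'_{i-1}, r'_{i-1}). Then for all n ≥ 2, the determinant d_{n+1} r'_{n+1} - d'_{n+1} r_{n+1} equals the determinant d_{n-1} r_{n-2} - d_{n-2} r_{n-1}. -/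
/-- Lemma `lemma.claim2`: for sequences of integers satisfying the triad mutation
recursions, for all `n ≥ 2` one has
`d_{n+1} r'_{n+1} - d'_{n+1} r_{n+1} = d_{n-1} r_{n-2} - d_{n-2} r_{n-1}`.
(Stated with `n = m + 2`.) -/
theorem stmt_1 (d r d' r' : ℕ → ℤ)
    (hd' : ∀ i, d' (i + 2) = (d (i + 1) * r i - d i * r (i + 1)) * d (i + 1) - d i)
    (hr' : ∀ i, r' (i + 2) = (d (i + 1) * r i - d i * r (i + 1)) * r (i + 1) - r i)
    (hd : ∀ i, d (i + 2) = (d (i + 1) * r' (i + 1) - d' (i + 1) * r (i + 1)) * d (i + 1)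
      - d' (i + 1))
    (hr : ∀ i, r (i + 2) = (d (i + 1) * r' (i + 1) - d' (i + 1) * r (i + 1)) * r (i + 1)
      - r' (i + 1)) :
    ∀ m, d (m + 3) * r' (m + 3) - d' (m + 3) * r (m + 3)
      = d (m + 1) * r m - d m * r (m + 1) := by
  intro m
  have h1 := hd (m + 1)
  have h2 := hr (m + 1)
  have h3 := hd' (m + 1)
  have h4 := hr' (m + 1)
  have h5 := hd' m
  have h6 := hr' m
  simp only [show m + 1 + 2 = m + 3 from rfl, show m + 1 + 1 = m + 2 from rfl] at *
  rw [h1, h2, h3, h4, h5, h6]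
  ring
end

section
/- Let d_i, r_i, d'_i, r'_i be sequences of integers satisfying the recursions (d'_i, r'_i) = (d_{i-1} r_{i-2} - d_{i-2} r_{i-1})·(d_{i-1}, r_{i-1}) - (d_{i-2}, r_{i-2}) and (d_i, r_i) = (d_{i-1} r'_{i-1} - d'_{i-1} r_{i-1})·(d_{i-1}, r_{i-1}) - (d'_{i-1}, r'_{i-1}). Then for all n ≥ 3, d_{n+1} r_n - d_n r_{n+1} = d_{n-2} r_{n-3} - d_{n-3} r_{n-2}, and d_{n+1} r'_{n+1} - d'_{n+1} r_{n+1} = d_{n-2} r'_{n-2} - d'_{n-2} r_{n-2}. In other words, the sequence of 2×2 determinants is 3-periodic. -/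
/-- Corollary `cor.periodicity`: the 2×2 determinants built from the numerical
invariants of a seed are 3-periodic: for all `n ≥ 3` (here `n = m + 3`),
`d_{n+1} r_n - d_n r_{n+1} = d_{n-2} r_{n-3} - d_{n-3} r_{n-2}` and
`d_{n+1} r'_{n+1} - d'_{n+1} r_{n+1} = d_{n-2} r'_{n-2} - d'_{n-2} r_{n-2}`. -/
theorem stmt_2 (d r d' r' : ℕ → ℤ)
    (hd' : ∀ i, d' (i + 2) = (d (i + 1) * r i - d i * r (i + 1)) * d (i + 1) - d i)
    (hr' : ∀ i, r' (i + 2) = (d (i + 1) * r i - d i * r (i + 1)) * r (i + 1) - r i)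
    (hd : ∀ i, d (i + 2) = (d (i + 1) * r' (i + 1) - d' (i + 1) * r (i + 1)) * d (i + 1)
      - d' (i + 1))
    (hr : ∀ i, r (i + 2) = (d (i + 1) * r' (i + 1) - d' (i + 1) * r (i + 1)) * r (i + 1)
      - r' (i + 1)) :
    ∀ m, (d (m + 4) * r (m + 3) - d (m + 3) * r (m + 4)
        = d (m + 1) * r m - d m * r (m + 1))
      ∧ (d (m + 4) * r' (m + 4) - d' (m + 4) * r (m + 4)
        = d (m + 1) * r' (m + 1) - d' (m + 1) * r (m + 1)) := by
  intro m
  have H1 : d (m+4) = (d (m+3) * r' (m+3) - d' (m+3) * r (m+3)) * d (m+3) - d' (m+3) :=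
    hd (m+2)
  have H2 : r (m+4) = (d (m+3) * r' (m+3) - d' (m+3) * r (m+3)) * r (m+3) - r' (m+3) :=
    hr (m+2)
  have H3 : d' (m+4) = (d (m+3) * r (m+2) - d (m+2) * r (m+3)) * d (m+3) - d (m+2) :=
    hd' (m+2)
  have H4 : r' (m+4) = (d (m+3) * r (m+2) - d (m+2) * r (m+3)) * r (m+3) - r (m+2) :=
    hr' (m+2)
  have H5 : d (m+3) = (d (m+2) * r' (m+2) - d' (m+2) * r (m+2)) * d (m+2) - d' (m+2) :=
    hd (m+1)
  have H6 : r (m+3) = (d (m+2) * r' (m+2) - d' (m+2) * r (m+2)) * r (m+2) - r' (m+2) :=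
    hr (m+1)
  have H7 : d' (m+3) = (d (m+2) * r (m+1) - d (m+1) * r (m+2)) * d (m+2) - d (m+1) :=
    hd' (m+1)
  have H8 : r' (m+3) = (d (m+2) * r (m+1) - d (m+1) * r (m+2)) * r (m+2) - r (m+1) :=
    hr' (m+1)
  have H9 : d (m+2) = (d (m+1) * r' (m+1) - d' (m+1) * r (m+1)) * d (m+1) - d' (m+1) :=
    hd m
  have H10 : r (m+2) = (d (m+1) * r' (m+1) - d' (m+1) * r (m+1)) * r (m+1) - r' (m+1) :=
    hr m
  have H11 : d' (m+2) = (d (m+1) * r m - d m * r (m+1)) * d (m+1) - d m := hd' m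
  have H12 : r' (m+2) = (d (m+1) * r m - d m * r (m+1)) * r (m+1) - r m := hr' m
  constructor <;>
    · simp only [H1, H2, H3, H4, H5, H6, H7, H8, H9, H10, H11, H12]; ring
end

section
/- Let d be an integer and let d_i, r_i, d'_i, r'_i be sequences of integers satisfying the recursions (d'_i, r'_i) = (d_{i-1} r_{i-2} - d_{i-2} r_{i-1})·(d_{i-1}, r_{i-1}) - (d_{i-2}, r_{i-2}) and (d_i, r_i) = (d_{i-1} r'_{i-1} - d'_{i-1} r_{i-1})·(d_{i-1}, r_{i-1}) - (d'_{i-1}, r'_{i-1}), with initial conditions (d_0, r_0) = (0, 1), (d'_1, r'_1) = (d, 2), (d_1, r_1) = (d, 1). Then for all n ≥ 1, the determinants d_n r_{n-1} - d_{n-1} r_n, d_n r'_n - d'_n r_n, and d'_n r_{n-1} - d_{n-1} r'_n all equal d. -/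
/-- Lemma `lemma.constant`: for the numerical invariants generated by the seed
`(0, d/2, d)`, i.e. with initial values `(d₀,r₀) = (0,1)`, `(d'₁,r'₁) = (d,2)`,
`(d₁,r₁) = (d,1)`, all three 2×2 determinants equal `d` for all `n ≥ 1`
(here `n = m + 1`). -/
theorem stmt_3 (dd : ℤ) (d r d' r' : ℕ → ℤ)
    (h0 : d 0 = 0) (h0' : r 0 = 1)
    (h1 : d' 1 = dd) (h1' : r' 1 = 2)
    (h2 : d 1 = dd) (h2' : r 1 = 1)
    (hd' : ∀ i, d' (i + 2) = (d (i + 1) * r i - d i * r (i + 1)) * d (i + 1) - d i)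
    (hr' : ∀ i, r' (i + 2) = (d (i + 1) * r i - d i * r (i + 1)) * r (i + 1) - r i)
    (hd : ∀ i, d (i + 2) = (d (i + 1) * r' (i + 1) - d' (i + 1) * r (i + 1)) * d (i + 1)
      - d' (i + 1))
    (hr : ∀ i, r (i + 2) = (d (i + 1) * r' (i + 1) - d' (i + 1) * r (i + 1)) * r (i + 1)
      - r' (i + 1)) :
    ∀ m, (d (m + 1) * r m - d m * r (m + 1) = dd)
      ∧ (d (m + 1) * r' (m + 1) - d' (m + 1) * r (m + 1) = dd)
      ∧ (d' (m + 1) * r m - d m * r' (m + 1) = dd) := by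
  intro m
  induction m with
  | zero =>
    refine ⟨?_, ?_, ?_⟩ <;> simp [h0, h0', h1, h1', h2, h2'] <;> ring
  | succ n ih =>
    obtain ⟨H1, H2, H3⟩ := ih
    rw [hd n, hr n, hd' n, hr' n]
    refine ⟨by linear_combination H2, by linear_combination H3, by linear_combination H1⟩
end

section
/- Let d ≥ 5 be an integer and let r_n be defined by r_0 = r_1 = 1, r_2 = d-2, and r_{n+1} = d·r_n - d·r_{n-1} + r_{n-2} for n ≥ 2. Then for all n ≥ 1, r_{n+1}/r_n ≥ (d-1)/2; in particular r_{n+1} ≥ 2·r_n for all n ≥ 1. -/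
/-- Proposition `prop.ratio`: for `d ≥ 5` and the rank sequence `r₀ = r₁ = 1`,
`r₂ = d - 2`, `r_{n+1} = d·r_n - d·r_{n-1} + r_{n-2}`, one has
`r_{n+1}/r_n ≥ (d-1)/2` for all `n ≥ 1`; in particular `r_{n+1} ≥ 2·r_n`. -/
theorem stmt_9 (d : ℤ) (hd : 5 ≤ d) (r : ℕ → ℤ)
    (h0 : r 0 = 1) (h1 : r 1 = 1) (h2 : r 2 = d - 2)
    (hrec : ∀ n, r (n + 3) = d * r (n + 2) - d * r (n + 1) + r n) :
    ∀ n : ℕ, 1 ≤ n →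
      ((d : ℝ) - 1) / 2 ≤ (r (n + 1) : ℝ) / (r n : ℝ) ∧ 2 * r n ≤ r (n + 1) := by
  have Q : ∀ n : ℕ, 0 ≤ r n ∧ 0 < r (n + 1) ∧ (d - 1) * r (n + 1) ≤ 2 * r (n + 2) := by
    intro n
    induction n with
    | zero =>
      refine ⟨by simp [h0], by norm_num [show (0:ℕ)+1 = 1 from rfl, h1], ?_⟩
      simp only [show (0:ℕ)+1 = 1 from rfl, show (0:ℕ)+2 = 2 from rfl, h1, h2]; nlinarith
    | succ m ih =>
      obtain ⟨ha, hb, hc⟩ := ih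
      have hpos : 0 < r (m + 2) := by nlinarith
      refine ⟨le_of_lt hb, hpos, ?_⟩
      have := hrec m
      nlinarith
  intro n hn
  obtain ⟨m, rfl⟩ : ∃ m, n = m + 1 := ⟨n - 1, by omega⟩
  obtain ⟨ha, hb, hc⟩ := Q m
  have h2r : 2 * r (m + 1) ≤ r (m + 2) := by nlinarith
  refine ⟨?_, h2r⟩
  rw [div_le_div_iff₀ (by norm_num) (by exact_mod_cast hb)]
  have : (d - 1) * r (m + 1) ≤ r (m + 2) * 2 := by linarith
  exact_mod_cast this
end

section
/- Let d ≥ 5 be an integer, A = √((d-3)(d+1)), and let r_n, d_n be the sequences with closed forms r_n = 2^{-n-1}((d-1-A)^n((d-3)/A+1) + (d-1+A)^n(1-(d-3)/A)) and d_n = (2^{-n}d/A)((d-1+A)^n - (d-1-A)^n). Then the limit of d_n/r_n as n → ∞ exists and equals 2d/(A-(d-3)), and this limit is irrational. -/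
open Filter

/-- Lemma `lem:rightlimitslope`: for `d ≥ 5`, with `A = √((d-3)(d+1))` and the
rank and degree sequences given by their closed forms, the slopes `d_n/r_n`
converge to `2d/(A - (d-3))`, and this limit is irrational. -/
theorem stmt_11 (d : ℤ) (hd : 5 ≤ d) (r b : ℕ → ℝ)
    (hr : ∀ n : ℕ,
      r n = (((d : ℝ) - 1 - Real.sqrt (((d : ℝ) - 3) * ((d : ℝ) + 1))) ^ n
              * (((d : ℝ) - 3) / Real.sqrt (((d : ℝ) - 3) * ((d : ℝ) + 1)) + 1)
            + ((d : ℝ) - 1 + Real.sqrt (((d : ℝ) - 3) * ((d : ℝ) + 1))) ^ n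
              * (1 - ((d : ℝ) - 3) / Real.sqrt (((d : ℝ) - 3) * ((d : ℝ) + 1))))
          / 2 ^ (n + 1))
    (hb : ∀ n : ℕ,
      b n = ((d : ℝ) / Real.sqrt (((d : ℝ) - 3) * ((d : ℝ) + 1)))
          * ((((d : ℝ) - 1 + Real.sqrt (((d : ℝ) - 3) * ((d : ℝ) + 1))) ^ n
            - ((d : ℝ) - 1 - Real.sqrt (((d : ℝ) - 3) * ((d : ℝ) + 1))) ^ n))
          / 2 ^ n) :
    Tendsto (fun n : ℕ => b n / r n) atTop
        (nhds (2 * (d : ℝ)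
          / (Real.sqrt (((d : ℝ) - 3) * ((d : ℝ) + 1)) - ((d : ℝ) - 3))))
    ∧ Irrational (2 * (d : ℝ)
        / (Real.sqrt (((d : ℝ) - 3) * ((d : ℝ) + 1)) - ((d : ℝ) - 3))) := by
  have hd' : (5:ℝ) ≤ (d:ℝ) := by exact_mod_cast hd
  set A : ℝ := Real.sqrt (((d : ℝ) - 3) * ((d : ℝ) + 1)) with hA
  have hDpos : (0:ℝ) < ((d : ℝ) - 3) * ((d : ℝ) + 1) := by nlinarith
  have hApos : 0 < A := Real.sqrt_pos.mpr hDpos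
  have hAsq : A ^ 2 = ((d : ℝ) - 3) * ((d : ℝ) + 1) := Real.sq_sqrt hDpos.le
  have hAlt : A < (d:ℝ) - 1 := by
    rw [hA, show ((d : ℝ) - 3) * ((d : ℝ) + 1) = ((d:ℝ)-1)^2 - 4 by ring]
    nlinarith [Real.sq_sqrt (show (0:ℝ) ≤ ((d:ℝ)-1)^2 - 4 by nlinarith),
      Real.sqrt_nonneg (((d:ℝ)-1)^2 - 4)]
  have hAgt : (d:ℝ) - 3 < A := by nlinarith
  -- abbreviations
  set a : ℝ := (d:ℝ) - 1 - A with ha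
  set c : ℝ := (d:ℝ) - 1 + A with hc
  have hapos : 0 < a := by simp only [ha]; linarith
  have hcpos : 0 < c := by simp only [hc]; linarith
  have hac : a < c := by simp only [ha, hc]; linarith
  set q : ℝ := a / c with hq
  have hq0 : 0 ≤ q := le_of_lt (div_pos hapos hcpos)
  have hq1 : q < 1 := (div_lt_one hcpos).mpr hac
  set α : ℝ := ((d:ℝ) - 3) / A + 1 with hαdef
  set β : ℝ := 1 - ((d:ℝ) - 3) / A with hβdef
  have hβpos : 0 < β := by
    have : ((d:ℝ) - 3) / A < 1 := (div_lt_one hApos).mpr hAgt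
    simp only [hβdef]; linarith
  have hαpos : 0 < α := by
    have : 0 ≤ ((d:ℝ) - 3) / A := div_nonneg (by linarith) hApos.le
    simp only [hαdef]; linarith
  have hL : 2 * (d:ℝ) * A⁻¹ * (1 - 0) / (0 * α + β) =
      2 * (d : ℝ) / (A - ((d : ℝ) - 3)) := by
    rw [hβdef]
    rw [show (1:ℝ) - ((d:ℝ) - 3)/A = (A - ((d:ℝ)-3))/A by field_simp]
    field_simp
    simp
  constructor
  · -- limit
    have key : ∀ n : ℕ, b n / r n = 2 * (d:ℝ) * A⁻¹ * (1 - q ^ n) / (q ^ n * α + β) := by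
      intro n
      have hcn : c ^ n ≠ 0 := pow_ne_zero _ hcpos.ne'
      have h2n : (2:ℝ) ^ n ≠ 0 := pow_ne_zero _ two_ne_zero
      have hAne : A ≠ 0 := hApos.ne'
      rw [hb n, hr n, hq, div_pow, pow_succ]
      field_simp
    rw [show (fun n : ℕ => b n / r n)
        = (fun n : ℕ => 2 * (d:ℝ) * A⁻¹ * (1 - q ^ n) / (q ^ n * α + β))
        from funext key, ← hL]
    have hqlim : Tendsto (fun n : ℕ => q ^ n) atTop (nhds 0) :=
      tendsto_pow_atTop_nhds_zero_of_lt_one hq0 hq1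
    apply Tendsto.div
    · exact (tendsto_const_nhds.sub hqlim).const_mul _
    · exact (hqlim.mul_const α).add tendsto_const_nhds
    · simpa using hβpos.ne'
  · -- irrationality
    have hAirr : Irrational A := by
      apply irrational_nrt_of_notint_nrt 2 ((d - 3) * (d + 1))
      · rw [hAsq]; push_cast; ring
      · rintro ⟨y, hy⟩
        have hy3 : ((d:ℝ) - 3) < (y:ℝ) := by rw [← hy]; exact hAgt
        have hy1 : (y:ℝ) < (d:ℝ) - 1 := by rw [← hy]; exact hAlt
        have h3 : d - 3 < y := by exact_mod_cast hy3
        have h1 : y < d - 1 := by exact_mod_cast hy1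
        have hy2 : ((y:ℝ)) ^ 2 = ((d:ℝ) - 3) * ((d:ℝ) + 1) := by rw [← hy]; exact hAsq
        have : y ^ 2 = (d - 3) * (d + 1) := by exact_mod_cast hy2
        have hyd : y = d - 2 := by omega
        rw [hyd] at this
        nlinarith
      · norm_num
    intro ⟨p, hp⟩
    have hden : A - ((d:ℝ) - 3) ≠ 0 := by linarith
    have hdne : (d:ℝ) ≠ 0 := by linarith
    have hLpos : 0 < 2 * (d:ℝ) / (A - ((d:ℝ) - 3)) := by
      apply div_pos (by linarith) (by linarith)
    have hpne : (p:ℝ) ≠ 0 := by rw [hp]; exact hLpos.ne'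
    have hAval : A = 2 * (d:ℝ) / (p:ℝ) + ((d:ℝ) - 3) := by
      have := hp
      field_simp at this ⊢
      linarith [this]
    exact hAirr ⟨2 * (d:ℚ) / p + ((d:ℚ) - 3), by push_cast; rw [hAval]⟩
end

section
/- Let k be a field and A a ℤ-indexed quadratic k-algebra (connected, locally finite, generated in degree one, with quadratic relations). If the Koszul dual A^! is n-periodic (i.e., A^! ≅ A^!(n) as ℤ-indexed algebras), then A is n-periodic. -/
open TensorProduct Module

/-- A quadratic ℤ-indexed algebra `A` (connected, locally finite, generated in
degree one, with quadratic relations) is completely determined by its quadratic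
data: the degree-one components `V i = A_{i,i+1}` and the relation subspaces
`I i ⊆ V i ⊗ V (i+1)`.  `A` is `n`-periodic iff there are linear isomorphisms
`V i ≃ V (i+n)` carrying `I i` onto `I (i+n)`. -/
def QuadraticDataPeriodic (k : Type*) [Field k] (V : ℤ → Type*)
    [∀ i, AddCommGroup (V i)] [∀ i, Module k (V i)]
    (I : ∀ i : ℤ, Submodule k (V i ⊗[k] V (i + 1))) (n : ℤ) : Prop :=
  ∃ e : ∀ i j : ℤ, j = i + n → (V i ≃ₗ[k] V j),
    ∀ i : ℤ, Submodule.map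
      (TensorProduct.map (↑(e i (i + n) rfl) : V i →ₗ[k] V (i + n))
        (↑(e (i + 1) (i + n + 1) (by ring)) : V (i + 1) →ₗ[k] V (i + n + 1)))
      (I i) = I (i + n)


section Aux

variable {k : Type*} [Field k]

noncomputable def dualizeEquiv {M N : Type*}
    [AddCommGroup M] [Module k M] [AddCommGroup N] [Module k N]
    [FiniteDimensional k M] [FiniteDimensional k N]
    (g : Dual k M ≃ₗ[k] Dual k N) : M ≃ₗ[k] N :=
  (Module.evalEquiv k M).trans (g.symm.dualMap.trans (Module.evalEquiv k N).symm)

lemma dualizeEquiv_symm_spec {M N : Type*}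
    [AddCommGroup M] [Module k M] [AddCommGroup N] [Module k N]
    [FiniteDimensional k M] [FiniteDimensional k N]
    (g : Dual k M ≃ₗ[k] Dual k N) (ψ : Dual k M) (v : N) :
    ψ ((dualizeEquiv g).symm v) = g ψ v := by
  simp [dualizeEquiv]

lemma map_dualAnn {M N : Type*}
    [AddCommGroup M] [Module k M] [AddCommGroup N] [Module k N]
    (e : M ≃ₗ[k] N) (p : Submodule k M) :
    (p.map (e : M →ₗ[k] N)).dualAnnihilator
      = p.dualAnnihilator.map (e.symm.dualMap : Dual k M →ₗ[k] Dual k N) := by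
  ext φ
  simp only [Submodule.mem_dualAnnihilator, Submodule.mem_map]
  constructor
  · intro h
    refine ⟨e.dualMap φ, fun w hw => h _ ⟨w, hw, rfl⟩, ?_⟩
    ext x; simp
  · rintro ⟨ψ, hψ, rfl⟩ x ⟨w, hw, rfl⟩
    simpa using hψ w hw

def VcastEquiv (k : Type*) [Field k] (V : ℤ → Type*) [∀ i, AddCommGroup (V i)]
    [∀ i, Module k (V i)] {a b : ℤ} (h : a = b) : V a ≃ₗ[k] V b := by
  subst h; exact LinearEquiv.refl k (V a)

lemma dualDistribEquivOfBasis_apply' {R M N ι κ : Type*} [DecidableEq ι] [DecidableEq κ]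
    [Fintype ι] [Fintype κ] [CommRing R] [AddCommGroup M] [AddCommGroup N]
    [Module R M] [Module R N] (b : Basis ι R M) (c : Basis κ R N)
    (x : Dual R M ⊗[R] Dual R N) :
    TensorProduct.dualDistribEquivOfBasis b c x = TensorProduct.dualDistrib R M N x := rfl

end Aux

/-- Lemma `lemma.Periodic`: let `A` be a quadratic ℤ-indexed `k`-algebra with
degree-one components `V i` and quadratic relations `I i ⊆ V i ⊗ V (i+1)`.
Its Koszul dual `A^!` is the quadratic algebra on the dual spaces `V i^*` with
relations the annihilator `I i^⊥ ⊆ V (i+1)^* ⊗ V i^*` of `I i` under the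
canonical pairing.  If `A^!` is `n`-periodic, then `A` is `n`-periodic. -/
theorem stmt_18 (k : Type*) [Field k] (V : ℤ → Type*)
    [∀ i, AddCommGroup (V i)] [∀ i, Module k (V i)]
    [∀ i, FiniteDimensional k (V i)]
    (I : ∀ i : ℤ, Submodule k (V i ⊗[k] V (i + 1)))
    -- the relations of the Koszul dual: `I i^⊥ ⊆ V (i+1)^* ⊗ V i^*`
    (Iperp : ∀ i : ℤ, Submodule k (Dual k (V (i + 1)) ⊗[k] Dual k (V i)))
    (hIperp : ∀ i : ℤ, Iperp i = Submodule.comap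
      (((TensorProduct.dualDistribEquiv k (V i) (V (i + 1))).toLinearMap).comp
        (TensorProduct.comm k (Dual k (V (i + 1))) (Dual k (V i))).toLinearMap)
      (I i).dualAnnihilator)
    (n : ℤ)
    -- hypothesis: the Koszul dual `A^!` is `n`-periodic
    (hdual : ∃ f : ∀ i j : ℤ, j = i + n → (Dual k (V i) ≃ₗ[k] Dual k (V j)),
      ∀ i : ℤ, Submodule.map
        (TensorProduct.map
          (↑(f (i + 1) (i + n + 1) (by ring)) :
            Dual k (V (i + 1)) →ₗ[k] Dual k (V (i + n + 1)))
          (↑(f i (i + n) rfl) : Dual k (V i) →ₗ[k] Dual k (V (i + n))))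
        (Iperp i) = Iperp (i + n)) :
    -- conclusion: `A` is `n`-periodic
    QuadraticDataPeriodic k V I n := by
  obtain ⟨f, hf⟩ := hdual
  set F : ∀ i : ℤ, V i ≃ₗ[k] V (i + n) :=
    fun i => dualizeEquiv (f i (i + n) rfl) with hFdef
  set G : ∀ i : ℤ, V (i + 1) ≃ₗ[k] V (i + n + 1) :=
    fun i => dualizeEquiv (f (i + 1) (i + n + 1) (by ring)) with hGdef
  -- the pairing equivalences
  set Φ : ∀ j : ℤ, (Dual k (V (j + 1)) ⊗[k] Dual k (V j)) ≃ₗ[k] Dual k (V j ⊗[k] V (j + 1)) :=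
    fun j => (TensorProduct.comm k (Dual k (V (j + 1))) (Dual k (V j))).trans
      (TensorProduct.dualDistribEquiv k (V j) (V (j + 1))) with hΦdef
  have hΦ : ∀ j : ℤ, Submodule.map (Φ j : _ →ₗ[k] _) (Iperp j) = (I j).dualAnnihilator := by
    intro j
    have h0 : (((TensorProduct.dualDistribEquiv k (V j) (V (j + 1))).toLinearMap).comp
        (TensorProduct.comm k (Dual k (V (j + 1))) (Dual k (V j))).toLinearMap)
        = (Φ j : _ →ₗ[k] _) := rfl
    rw [hIperp j, h0]
    exact Submodule.map_comap_eq_of_surjective (Φ j).surjective _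
  have core : ∀ i : ℤ, Submodule.map
      (TensorProduct.map (F i : V i →ₗ[k] V (i + n)) (G i : V (i + 1) →ₗ[k] V (i + n + 1)))
      (I i) = I (i + n) := by
    intro i
    set E : (V i ⊗[k] V (i + 1)) ≃ₗ[k] (V (i + n) ⊗[k] V (i + n + 1)) :=
      TensorProduct.congr (F i) (G i) with hEdef
    have hE : TensorProduct.map (F i : V i →ₗ[k] V (i + n))
        (G i : V (i + 1) →ₗ[k] V (i + n + 1)) = (E : _ →ₗ[k] _) := rfl
    have key : (E.symm.dualMap : Dual k (V i ⊗[k] V (i + 1)) →ₗ[k]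
          Dual k (V (i + n) ⊗[k] V (i + n + 1))) ∘ₗ (Φ i : _ →ₗ[k] _)
        = (Φ (i + n) : _ →ₗ[k] _) ∘ₗ TensorProduct.map
          (↑(f (i + 1) (i + n + 1) (by ring)) :
            Dual k (V (i + 1)) →ₗ[k] Dual k (V (i + n + 1)))
          (↑(f i (i + n) rfl) : Dual k (V i) →ₗ[k] Dual k (V (i + n))) := by
      apply TensorProduct.ext'
      intro φ ψ
      apply TensorProduct.ext'
      intro v w
      simp only [LinearMap.comp_apply, LinearEquiv.coe_coe, TensorProduct.map_tmul,
        hΦdef, LinearEquiv.trans_apply, TensorProduct.comm_tmul,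
        TensorProduct.dualDistribEquiv, dualDistribEquivOfBasis_apply',
        TensorProduct.dualDistrib_apply, LinearEquiv.dualMap_apply]
      rw [show E.symm (v ⊗ₜ[k] w) = (F i).symm v ⊗ₜ[k] (G i).symm w from rfl,
        TensorProduct.dualDistrib_apply]
      rw [hFdef, hGdef]
      simp only [dualizeEquiv_symm_spec]
    have h3 : (Submodule.map (E : _ →ₗ[k] _) (I i)).dualAnnihilator
        = (I (i + n)).dualAnnihilator := by
      rw [map_dualAnn E (I i), ← hΦ i, ← Submodule.map_comp, key, Submodule.map_comp,
        hf i, hΦ (i + n)]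
    have h4 := congrArg Submodule.dualCoannihilator h3
    rwa [Subspace.dualAnnihilator_dualCoannihilator_eq,
      Subspace.dualAnnihilator_dualCoannihilator_eq, ← hE] at h4
  refine ⟨fun i j h => (F i).trans (VcastEquiv k V h.symm), fun i => ?_⟩
  have fcast : ∀ (a b b' : ℤ) (hb : b = a + n) (h : b = b') (x : V a),
      VcastEquiv k V h (dualizeEquiv (f a b hb) x) = dualizeEquiv (f a b' (h ▸ hb)) x := by
    intro a b b' hb h x
    subst h
    rfl
  have h1 : (↑((F i).trans (VcastEquiv k V (rfl : i + n = i + n))) : V i →ₗ[k] V (i + n))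
      = (F i : V i →ₗ[k] V (i + n)) := by
    ext x; rfl
  have h2 : (↑((F (i + 1)).trans (VcastEquiv k V (show (i + 1) + n = i + n + 1 by ring)))
        : V (i + 1) →ₗ[k] V (i + n + 1))
      = (G i : V (i + 1) →ₗ[k] V (i + n + 1)) := by
    ext x
    simp only [LinearEquiv.coe_coe, LinearEquiv.trans_apply]
    rw [hFdef]
    exact fcast (i + 1) ((i + 1) + n) (i + n + 1) rfl (by ring) x
  rw [show (VcastEquiv k V (Eq.symm (rfl : i + n = i + n))) = VcastEquiv k V rfl from rfl] at h1
  rw [h1, h2]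
  exact core i
end
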